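/- arXiv:1710.05119 — 2 statements merged into one kernel-verified Lean document; each statement's English description precedes it below -/
import Mathlib

section
/- If g:(0,h)→ℝ is measurable, non-negative, non-increasing, with x·g(x) integrable, then for any a>0, ∫₀^{h} g(x) sin(ax) dx ≥ 0. -/
/-!
Since `|sin (a x)| ≤ a x`, integrability of `x g(x)` makes `g(x) sin(a x)` integrable.
Rescaling `y = a x` reduces to `a = 1`. Extended by zero beyond `h`, `g` stays non-increasing
on `(0, ∞)`, so the integral is a sum of integrals over full periods `[2πk, 2πk + 2π]`.
On such a period, pairing `x` with `x + π` gives `∫ (g x - g (x + π)) sin x` over the half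
period where `sin ≥ 0`, and this integrand is non-negative.
-/

open MeasureTheory Set Real

theorem integrableOn_mul_sin_mul {g : ℝ → ℝ} {s : Set ℝ}
    (hg : AEStronglyMeasurable g (volume.restrict s))
    (hint : IntegrableOn (fun x => x * g x) s) (a : ℝ) :
    IntegrableOn (fun x => g x * sin (a * x)) s := by
  refine (hint.const_mul a).mono
    (hg.mul (continuous_sin.comp (continuous_const_mul a)).aestronglyMeasurable) ?_
  refine ae_of_all _ fun x => ?_
  calc ‖g x * sin (a * x)‖ = |g x| * |sin (a * x)| := abs_mul _ _
    _ ≤ |g x| * |a * x| := mul_le_mul_of_nonneg_left abs_sin_le_abs (abs_nonneg _)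
    _ = ‖a * (x * g x)‖ := by rw [Real.norm_eq_abs, abs_mul, abs_mul, abs_mul]; ring

theorem sin_nonneg_of_mem_Icc_two_pi_mul {x : ℝ} (k : ℤ)
    (hx : x ∈ Icc (2 * π * k) (2 * π * k + π)) :
    0 ≤ sin x := by
  rw [← sin_sub_int_mul_two_pi x k]
  exact sin_nonneg_of_nonneg_of_le_pi (by linarith [hx.1]) (by linarith [hx.2])

theorem intervalIntegral_mul_sin_period_nonneg {G : ℝ → ℝ} (k : ℤ)
    (hG : AntitoneOn G (Ioc (2 * π * k) (2 * π * k + 2 * π)))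
    (hint : IntervalIntegrable (fun x => G x * sin x) volume (2 * π * k) (2 * π * k + 2 * π)) :
    0 ≤ ∫ x in (2 * π * k)..(2 * π * k + 2 * π), G x * sin x := by
  set s := 2 * π * k
  have hintOn : ∀ c d, s ≤ c → c ≤ d → d ≤ s + 2 * π →
      IntervalIntegrable (fun x => G x * sin x) volume c d := fun c d hc hcd hd =>
    hint.mono_set (by rw [uIcc_of_le hcd, uIcc_of_le (by linarith)]; exact Icc_subset_Icc hc hd)
  have hfirst := hintOn s (s + π) le_rfl (by linarith [pi_pos]) (by linarith [pi_pos])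
  have hsecond := hintOn (s + π) (s + 2 * π) (by linarith [pi_pos]) (by linarith [pi_pos]) le_rfl
  have hpair : ∫ x in s..(s + 2 * π), G x * sin x
      = ∫ x in s..(s + π), (G x - G (x + π)) * sin x := by
    have hshift : ∫ x in (s + π)..(s + 2 * π), G x * sin x
        = ∫ x in s..(s + π), G (x + π) * sin (x + π) := by
      rw [intervalIntegral.integral_comp_add_right (fun x => G x * sin x)]; ring_nf
    rw [← intervalIntegral.integral_add_adjacent_intervals hfirst hsecond, hshift,
      ← intervalIntegral.integral_add hfirst
        (by simpa [two_mul, ← add_assoc] using hsecond.comp_add_right π)]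
    simp only [sin_add_pi]; congr 1; ext x; ring
  rw [hpair, intervalIntegral.integral_of_le (by linarith [pi_pos])]
  refine setIntegral_nonneg measurableSet_Ioc fun x hx => mul_nonneg ?_ ?_
  · exact sub_nonneg.2 <| hG ⟨hx.1, by linarith [hx.2, pi_pos]⟩
      ⟨by linarith [hx.1, pi_pos], by linarith [hx.2]⟩ (by linarith [pi_pos])
  · exact sin_nonneg_of_mem_Icc_two_pi_mul k (Ioc_subset_Icc_self hx)

theorem intervalIntegral_mul_sin_nonneg_of_antitoneOn {G : ℝ → ℝ} (hG : AntitoneOn G (Ioi 0))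
    (n : ℕ) (hint : IntervalIntegrable (fun x => G x * sin x) volume 0 (2 * π * n)) :
    0 ≤ ∫ x in (0 : ℝ)..(2 * π * n), G x * sin x := by
  have hperiod : ∀ k < n, IntervalIntegrable (fun x => G x * sin x) volume
      (2 * π * k) (2 * π * k + 2 * π) := fun k hk =>
    hint.mono_set <| by
      have hk' : (k : ℝ) + 1 ≤ n := by exact_mod_cast hk
      rw [uIcc_of_le (by linarith [pi_pos]), uIcc_of_le (by positivity)]
      exact Icc_subset_Icc (by positivity) (by nlinarith [pi_pos])
  have hsum := intervalIntegral.sum_integral_adjacent_intervals (a := fun k : ℕ => 2 * π * k)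
    (f := fun x => G x * sin x) (μ := volume) fun k hk => by
      simpa [mul_add] using hperiod k hk
  simp only [Nat.cast_zero, mul_zero, Nat.cast_succ, mul_add, mul_one] at hsum
  rw [← hsum]
  refine Finset.sum_nonneg fun k hk => ?_
  exact_mod_cast intervalIntegral_mul_sin_period_nonneg (G := G) k
    (hG.mono fun x hx => lt_of_le_of_lt (by positivity) hx.1)
    (by exact_mod_cast hperiod k (Finset.mem_range.1 hk))

theorem antitoneOn_indicator_Ioo {f : ℝ → ℝ} {c : ℝ} (hanti : AntitoneOn f (Ioo 0 c))
    (hnn : ∀ x ∈ Ioo 0 c, 0 ≤ f x) : AntitoneOn ((Ioo 0 c).indicator f) (Ioi 0) := by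
  intro x hx y _ hxy
  by_cases hy : y ∈ Ioo 0 c
  · have hx' : x ∈ Ioo 0 c := ⟨hx, hxy.trans_lt hy.2⟩
    simpa only [indicator_of_mem hx', indicator_of_mem hy] using hanti hx' hy hxy
  · rw [indicator_of_notMem hy]
    exact indicator_nonneg hnn x

theorem setIntegral_Ioo_mul_sin_nonneg {f : ℝ → ℝ} {c : ℝ} (hanti : AntitoneOn f (Ioo 0 c))
    (hnn : ∀ x ∈ Ioo 0 c, 0 ≤ f x) (hint : IntegrableOn (fun x => f x * sin x) (Ioo 0 c)) :
    0 ≤ ∫ x in Ioo 0 c, f x * sin x := by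
  set G := (Ioo 0 c).indicator f
  have hGsin : (Ioo 0 c).indicator (fun x => f x * sin x) = fun x => G x * sin x :=
    funext fun x => indicator_mul_left _ _ _
  have hGint : Integrable fun x => G x * sin x := by
    rw [← hGsin]; exact (integrable_indicator_iff measurableSet_Ioo).2 hint
  obtain ⟨n, hn⟩ : ∃ n : ℕ, c ≤ 2 * π * n := by
    refine ⟨⌈c / (2 * π)⌉₊, ?_⟩
    rw [← div_le_iff₀' (by positivity)]
    exact Nat.le_ceil _
  have hsupp : ∀ x ∉ Ioc 0 (2 * π * n), G x * sin x = 0 := fun x hx => by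
    rw [show G x = 0 from indicator_of_notMem (fun h => hx ⟨h.1, h.2.le.trans hn⟩) f, zero_mul]
  calc 0 ≤ ∫ x in (0 : ℝ)..(2 * π * n), G x * sin x :=
        intervalIntegral_mul_sin_nonneg_of_antitoneOn (antitoneOn_indicator_Ioo hanti hnn) n
          hGint.intervalIntegrable
    _ = ∫ x in Ioo 0 c, f x * sin x := by
      rw [intervalIntegral.integral_of_le (by positivity),
        setIntegral_eq_integral_of_forall_compl_eq_zero hsupp, ← hGsin,
        integral_indicator measurableSet_Ioo]

theorem sine_coeff_nonneg_general_general (g : ℝ → ℝ) (h a : ℝ) (ha : 0 < a)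
    (hmeas : AEMeasurable g (volume.restrict (Ioo 0 h)))
    (hnn : ∀ x ∈ Ioo 0 h, 0 ≤ g x)
    (hanti : AntitoneOn g (Ioo 0 h))
    (hint : IntegrableOn (fun x => x * g x) (Ioo 0 h)) :
    0 ≤ ∫ x in Ioo 0 h, g x * Real.sin (a * x) := by
  have hscale : (a * ·) '' Ioo 0 h = Ioo 0 (a * h) := by
    simpa using image_mul_left_Ioo ha 0 h
  have hderiv : ∀ x ∈ Ioo 0 h, HasDerivWithinAt (a * ·) a (Ioo 0 h) x := fun x _ => by
    simpa using ((hasDerivAt_id x).const_mul a).hasDerivWithinAt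
  have hinj : InjOn (a * ·) (Ioo 0 h) := (mul_right_injective₀ ha.ne').injOn
  have hjacobian : ∀ x, |a| • (g (a * x / a) * sin (a * x)) = a * (g x * sin (a * x)) := fun x => by
    rw [mul_div_cancel_left₀ x ha.ne', abs_of_pos ha, smul_eq_mul]
  have hmem : ∀ y ∈ Ioo 0 (a * h), y / a ∈ Ioo 0 h := fun y hy =>
    ⟨div_pos hy.1 ha, (div_lt_iff₀' ha).2 hy.2⟩
  have hrescaled : 0 ≤ ∫ y in Ioo 0 (a * h), g (y / a) * sin y := by
    refine setIntegral_Ioo_mul_sin_nonneg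
      (fun y hy z hz hyz => hanti (hmem y hy) (hmem z hz) (by gcongr))
      (fun y hy => hnn _ (hmem y hy)) ?_
    rw [← hscale, integrableOn_image_iff_integrableOn_abs_deriv_smul measurableSet_Ioo hderiv hinj]
    simp only [hjacobian]
    exact (integrableOn_mul_sin_mul hmeas.aestronglyMeasurable hint a).const_mul a
  rw [← hscale, integral_image_eq_integral_abs_deriv_smul measurableSet_Ioo hderiv hinj]
    at hrescaled
  simp only [hjacobian, integral_const_mul] at hrescaled
  exact nonneg_of_mul_nonneg_right hrescaled ha

theorem sine_coeff_nonneg_general (g : ℝ → ℝ) (h a : ℝ) (hh : 0 < h) (ha : 0 < a)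
    (hmeas : AEMeasurable g (volume.restrict (Ioo 0 h)))
    (hnn : ∀ x ∈ Ioo 0 h, 0 ≤ g x)
    (hanti : AntitoneOn g (Ioo 0 h))
    (hint : IntegrableOn (fun x => x * g x) (Ioo 0 h)) :
    0 ≤ ∫ x in Ioo 0 h, g x * Real.sin (a * x) :=
  sine_coeff_nonneg_general_general g h a ha hmeas hnn hanti hint
end

section
/- For 1-periodic square-integrable u with ρ_δ even, supported in (−δ,δ), and ρ_δ(|s|)/|s| integrable, the nonlocal Dirichlet integral admits the representation E_δ(u) = ∫_Ω |G_δ u(x)|² dx = ∫_Ω ∫_{(−δ,δ)²} (ρ_δ(|s|)ρ_δ(|t|)/(2st)) [u(x+s+t) − u(x)]² ds dt dx. -/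
/-!
With `k s = ρ |s| / s`, which is odd and integrable, `G_δ u x = ∫ k s (u (x + s) - u x) ds`.
Squaring and integrating in `x` first, periodicity reduces every `x`-integral to the
translation defect `D a = ∫₀¹ (u (x + a) - u x)²` (`sqDistTranslate u 1 a`): by polarization
the left side becomes `½ ∬ k s k t (D s + D t - D (s - t))` and the right side
`½ ∬ k s k t D (s + t)`. Since `∫ k = 0`, the terms `D s` and `D t` drop out, and the
reflection `t ↦ -t` turns `-D (s - t)` into `D (s + t)`. Fubini applies because
`D ≤ 4 ‖u‖₂²` and `k ⊗ k` is integrable.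
-/

open MeasureTheory Set Real

/-- The 1D nonlocal gradient operator. -/
noncomputable def Gop (ρ : ℝ → ℝ) (δ : ℝ) (u : ℝ → ℝ) (x : ℝ) : ℝ :=
  ∫ s in Set.Ioo (-δ) δ, ρ |s| * (u (x + s) - u x) / s

namespace Function.Periodic

variable {E : Type*} [NormedAddCommGroup E] {f : ℝ → E} {T : ℝ}

theorem aestronglyMeasurable_of_restrict_Ioo (hf : Periodic f T) (hT : 0 < T)
    (h : AEStronglyMeasurable f (volume.restrict (Ioo 0 T))) : AEStronglyMeasurable f volume := by
  have : VAddInvariantMeasure (AddSubgroup.zmultiples T) ℝ volume :=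
    ⟨fun c s _ => measure_preimage_add _ _ _⟩
  rw [Measure.restrict_congr_set Ioo_ae_eq_Ioc] at h
  rw [← Measure.restrict_univ (μ := volume), ← iUnion_Ioc_add_zsmul hT 0,
    aestronglyMeasurable_iUnion_iff]
  intro n
  rw [add_smul, one_smul, ← add_assoc]
  exact ((isAddFundamentalDomain_Ioc hT _).aestronglyMeasurable_on_iff
    (isAddFundamentalDomain_Ioc hT 0) hf.map_vadd_zmultiples).2 (by simpa using h)

theorem integrableOn_Ioo_comp_add (hf : Periodic f T) (hT : 0 < T)
    (h : IntegrableOn f (Ioo 0 T)) (c : ℝ) : IntegrableOn (fun x => f (x + c)) (Ioo 0 T) := by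
  rw [← intervalIntegrable_iff_integrableOn_Ioo_of_le hT.le] at h ⊢
  simpa using (hf.intervalIntegrable₀ hT.ne' h c (T + c)).comp_add_right c

variable [NormedSpace ℝ E]

theorem setIntegral_Ioo_comp_add (hf : Periodic f T) (hT : 0 ≤ T) (c : ℝ) :
    ∫ x in Ioo 0 T, f (x + c) = ∫ x in Ioo 0 T, f x := by
  rw [← integral_Ioc_eq_integral_Ioo, ← integral_Ioc_eq_integral_Ioo,
    ← intervalIntegral.integral_of_le hT, ← intervalIntegral.integral_of_le hT,
    intervalIntegral.integral_comp_add_right, zero_add, add_comm T c,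
    hf.intervalIntegral_add_eq c 0, zero_add]

end Function.Periodic

theorem aestronglyMeasurable_comp_add_prod {β E : Type*} [MeasurableSpace β] [TopologicalSpace E]
    {ν : Measure β} [SFinite ν] {f : ℝ → E} (hf : AEStronglyMeasurable f volume) {g : β → ℝ}
    (hg : Measurable g) (s : Set ℝ) :
    AEStronglyMeasurable (fun z : ℝ × β => f (z.1 + g z.2)) ((volume.restrict s).prod ν) :=
  hf.comp_quasiMeasurePreserving <| QuasiMeasurePreserving.prod_of_left (by fun_prop) <|
    ae_of_all _ fun y => (measurePreserving_add_right volume (g y)).quasiMeasurePreserving.mono_left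
      Measure.restrict_le_self.absolutelyContinuous

section Translates

variable {u : ℝ → ℝ} {T : ℝ}

noncomputable def sqDistTranslate (u : ℝ → ℝ) (T c : ℝ) : ℝ :=
  ∫ x in Ioo 0 T, (u (x + c) - u x) ^ 2

theorem aestronglyMeasurable_sqDistTranslate (hu : AEStronglyMeasurable u volume) :
    AEStronglyMeasurable (sqDistTranslate u T) volume := by
  have h : AEStronglyMeasurable (fun z : ℝ × ℝ => (u (z.1 + z.2) - u z.1) ^ 2)
      ((volume.restrict (Ioo 0 T)).prod volume) :=
    ((aestronglyMeasurable_comp_add_prod hu measurable_id _).sub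
      (hu.restrict.comp_fst)).pow 2
  exact h.prod_swap.integral_prod_right'

variable (hper : Function.Periodic u T) (hT : 0 < T) (hL2 : MemLp u 2 (volume.restrict (Ioo 0 T)))
include hper hT hL2

theorem memLp_comp_add (c : ℝ) : MemLp (fun x => u (x + c)) 2 (volume.restrict (Ioo 0 T)) := by
  have hu := hper.aestronglyMeasurable_of_restrict_Ioo hT hL2.1
  refine (memLp_two_iff_integrable_sq ?_).2
    ((hper.comp (· ^ 2)).integrableOn_Ioo_comp_add hT hL2.integrable_sq c)
  exact (hu.comp_quasiMeasurePreserving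
    (measurePreserving_add_right volume c).quasiMeasurePreserving).restrict

theorem integrableOn_sq_sub_comp_add (a b : ℝ) :
    IntegrableOn (fun x => (u (x + a) - u (x + b)) ^ 2) (Ioo 0 T) :=
  ((memLp_comp_add hper hT hL2 a).sub (memLp_comp_add hper hT hL2 b)).integrable_sq

omit hL2 in
theorem integral_sq_sub_comp_add (a b : ℝ) :
    ∫ x in Ioo 0 T, (u (x + a) - u (x + b)) ^ 2 = sqDistTranslate u T (a - b) := by
  have hg : Function.Periodic (fun x => (u (x + (a - b)) - u x) ^ 2) T := fun x => by
    simp only [add_right_comm x T, hper _]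
  rw [sqDistTranslate, ← hg.setIntegral_Ioo_comp_add hT.le b]
  simp only [add_assoc, add_sub_cancel]

theorem abs_sqDistTranslate_le (c : ℝ) :
    |sqDistTranslate u T c| ≤ 4 * ∫ x in Ioo 0 T, u x ^ 2 := by
  have hsq : Function.Periodic (fun x => u x ^ 2) T := hper.comp (· ^ 2)
  have hc := (hsq.integrableOn_Ioo_comp_add hT hL2.integrable_sq c).const_mul 2
  rw [sqDistTranslate, abs_of_nonneg (setIntegral_nonneg measurableSet_Ioo fun x _ => sq_nonneg _)]
  calc ∫ x in Ioo 0 T, (u (x + c) - u x) ^ 2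
      ≤ ∫ x in Ioo 0 T, (2 * u (x + c) ^ 2 + 2 * u x ^ 2) :=
        setIntegral_mono (by simpa using integrableOn_sq_sub_comp_add hper hT hL2 c 0)
          (hc.fun_add (hL2.integrable_sq.const_mul 2))
          fun x => by nlinarith [sq_nonneg (u (x + c) + u x)]
    _ = 4 * ∫ x in Ioo 0 T, u x ^ 2 := by
        rw [integral_add hc (hL2.integrable_sq.const_mul 2), integral_const_mul,
          integral_const_mul, hsq.setIntegral_Ioo_comp_add hT.le c]
        ring

/-- Polarization: `2ab = a² + b² - (a - b)²`, and `a - b` is again a difference of translates. -/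
theorem integral_mul_sub_comp_add (s t : ℝ) :
    ∫ x in Ioo 0 T, (u (x + s) - u x) * (u (x + t) - u x)
      = (sqDistTranslate u T s + sqDistTranslate u T t - sqDistTranslate u T (s - t)) / 2 := by
  have hs := integrableOn_sq_sub_comp_add hper hT hL2 s 0
  have ht := integrableOn_sq_sub_comp_add hper hT hL2 t 0
  have hst := integrableOn_sq_sub_comp_add hper hT hL2 s t
  simp only [add_zero] at hs ht
  rw [← integral_sq_sub_comp_add hper hT s t, sqDistTranslate, sqDistTranslate,
    ← integral_add hs ht, ← integral_sub (hs.fun_add ht) hst, ← integral_div]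
  congr 1 with x
  ring

theorem integrableOn_mul_sub_comp_add (s t : ℝ) :
    IntegrableOn (fun x => (u (x + s) - u x) * (u (x + t) - u x)) (Ioo 0 T) :=
  ((memLp_comp_add hper hT hL2 s).sub hL2).integrable_mul ((memLp_comp_add hper hT hL2 t).sub hL2)

theorem integral_abs_mul_sub_comp_add_le (s t : ℝ) :
    ∫ x in Ioo 0 T, |(u (x + s) - u x) * (u (x + t) - u x)| ≤ 4 * ∫ x in Ioo 0 T, u x ^ 2 := by
  have hs := integrableOn_sq_sub_comp_add hper hT hL2 s 0
  have ht := integrableOn_sq_sub_comp_add hper hT hL2 t 0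
  simp only [add_zero] at hs ht
  have hmul := integrableOn_mul_sub_comp_add hper hT hL2 s t
  calc ∫ x in Ioo 0 T, |(u (x + s) - u x) * (u (x + t) - u x)|
      ≤ ∫ x in Ioo 0 T, ((u (x + s) - u x) ^ 2 + (u (x + t) - u x) ^ 2) / 2 :=
        setIntegral_mono hmul.abs ((hs.fun_add ht).div_const 2) fun x => by
          rw [abs_mul]
          nlinarith [sq_nonneg (|u (x + s) - u x| - |u (x + t) - u x|),
            sq_abs (u (x + s) - u x), sq_abs (u (x + t) - u x)]
    _ = (sqDistTranslate u T s + sqDistTranslate u T t) / 2 := by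
        rw [integral_div, integral_add hs ht, sqDistTranslate, sqDistTranslate]
    _ ≤ 4 * ∫ x in Ioo 0 T, u x ^ 2 := by
        linarith [abs_le.1 (abs_sqDistTranslate_le hper hT hL2 s),
          abs_le.1 (abs_sqDistTranslate_le hper hT hL2 t)]

end Translates

theorem integral_integral_swap_mul_of_bounded {α β : Type*} [MeasurableSpace α]
    [MeasurableSpace β] {μ : Measure α} {ν : Measure β} [SFinite μ] [SFinite ν] {K : β → ℝ}
    {G : α → β → ℝ} {M : ℝ} (hK : Integrable K ν)
    (hG : AEStronglyMeasurable (Function.uncurry G) (μ.prod ν))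
    (hGint : ∀ y, Integrable (G · y) μ) (hGbdd : ∀ y, ∫ x, |G x y| ∂μ ≤ M) :
    ∫ x, ∫ y, K y * G x y ∂ν ∂μ = ∫ y, K y * ∫ x, G x y ∂μ ∂ν := by
  have hKG : AEStronglyMeasurable (fun z : α × β => K z.2 * G z.1 z.2) (μ.prod ν) :=
    hK.1.comp_snd.mul hG
  have hint : Integrable (Function.uncurry fun x y => K y * G x y) (μ.prod ν) := by
    refine (integrable_prod_iff' hKG).2 ⟨ae_of_all _ fun y => (hGint y).const_mul (K y), ?_⟩
    refine Integrable.mono' (hK.norm.mul_const M) hKG.norm.prod_swap.integral_prod_right'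
      (ae_of_all _ fun y => ?_)
    rw [Real.norm_eq_abs, abs_of_nonneg (integral_nonneg fun _ => norm_nonneg _)]
    simp only [norm_mul, Real.norm_eq_abs, integral_const_mul]
    exact mul_le_mul_of_nonneg_left (hGbdd y) (abs_nonneg _)
  simp only [integral_integral_swap hint, integral_const_mul]

theorem integrable_mul_prod_mul_of_bounded {α : Type*} [MeasurableSpace α] {μ : Measure α}
    {k : α → ℝ} (hk : Integrable k μ) {g : α × α → ℝ} (hg : AEStronglyMeasurable g (μ.prod μ))
    {M : ℝ} (hgM : ∀ z, |g z| ≤ M) :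
    Integrable (fun z : α × α => k z.1 * k z.2 * g z) (μ.prod μ) :=
  (hk.mul_prod hk).mul_bdd hg (ae_of_all _ hgM)

instance isNegInvariant_restrict_Ioo_neg (δ : ℝ) :
    (volume.restrict (Ioo (-δ) δ)).IsNegInvariant := by
  constructor
  conv_rhs => rw [← Measure.map_neg_eq_self (volume : Measure ℝ),
    Measure.restrict_map measurable_neg measurableSet_Ioo]
  simp [Measure.neg]

section OddKernel

variable {μ : Measure ℝ} [μ.IsNegInvariant] {k : ℝ → ℝ}

theorem integral_eq_zero_of_odd (hodd : ∀ s, k (-s) = -k s) : ∫ s, k s ∂μ = 0 := by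
  have h := integral_neg_eq_self k μ
  simp only [hodd, integral_neg] at h
  linarith

variable [SFinite μ]

theorem integral_prod_comp_neg_right {β : Type*} [MeasurableSpace β] {ν : Measure β} [SFinite ν]
    (F : β × ℝ → ℝ) : ∫ z, F (z.1, -z.2) ∂ν.prod μ = ∫ z, F z ∂ν.prod μ :=
  ((MeasurePreserving.id ν).prod (Measure.measurePreserving_neg μ)).integral_comp'
    (f := (MeasurableEquiv.refl β).prodCongr (MeasurableEquiv.neg ℝ)) F

theorem integral_prod_odd_mul_sub_eq_add (hμ : μ ≪ volume) (hk : Integrable k μ)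
    (hodd : ∀ s, k (-s) = -k s) {f : ℝ → ℝ} (hf : AEStronglyMeasurable f volume) {M : ℝ}
    (hfM : ∀ a, |f a| ≤ M) :
    ∫ z, k z.1 * k z.2 * (f z.1 + f z.2 - f (z.1 - z.2)) ∂μ.prod μ
      = ∫ z, k z.1 * k z.2 * f (z.1 + z.2) ∂μ.prod μ := by
  have hfμ := hf.mono_ac hμ
  have hμμ : μ.prod μ ≪ (volume : Measure ℝ).prod volume := hμ.prod hμ
  have h₁ := integrable_mul_prod_mul_of_bounded hk hfμ.comp_fst fun z => hfM z.1
  have h₂ := integrable_mul_prod_mul_of_bounded hk hfμ.comp_snd fun z => hfM z.2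
  have h₃ : Integrable (fun z : ℝ × ℝ => k z.1 * k z.2 * f (z.1 - z.2)) (μ.prod μ) :=
    integrable_mul_prod_mul_of_bounded hk
    (hf.comp_quasiMeasurePreserving ((quasiMeasurePreserving_sub volume volume).mono_left hμμ))
    fun z => hfM (z.1 - z.2)
  have hfst : ∫ z, k z.1 * k z.2 * f z.1 ∂μ.prod μ = 0 := by
    simp only [mul_right_comm (k _) (k _)]
    rw [integral_prod_mul (fun s => k s * f s) k, integral_eq_zero_of_odd hodd, mul_zero]
  have hsnd : ∫ z, k z.1 * k z.2 * f z.2 ∂μ.prod μ = 0 := by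
    simp only [mul_assoc]
    rw [integral_prod_mul k (fun t => k t * f t), integral_eq_zero_of_odd hodd, zero_mul]
  have hrefl : ∫ z, k z.1 * k z.2 * f (z.1 - z.2) ∂μ.prod μ
      = -∫ z, k z.1 * k z.2 * f (z.1 + z.2) ∂μ.prod μ := by
    rw [← integral_prod_comp_neg_right, ← integral_neg]
    simp only [hodd, sub_eq_add_neg, mul_neg, neg_mul, neg_neg]
  simp only [mul_sub, mul_add]
  rw [integral_sub (h₁.fun_add h₂) h₃, integral_add h₁ h₂, hfst, hsnd, hrefl]
  ring

end OddKernel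

section KernelForms

variable {u : ℝ → ℝ} {T : ℝ} {μ : Measure ℝ} [SFinite μ] {k : ℝ → ℝ}
  (hper : Function.Periodic u T) (hT : 0 < T) (hL2 : MemLp u 2 (volume.restrict (Ioo 0 T)))
  (hk : Integrable k μ)
include hper hT hL2 hk

theorem integral_sq_integral_mul_sub_comp_add :
    ∫ x in Ioo 0 T, (∫ s, k s * (u (x + s) - u x) ∂μ) ^ 2
      = (∫ z, k z.1 * k z.2 * (sqDistTranslate u T z.1 + sqDistTranslate u T z.2
          - sqDistTranslate u T (z.1 - z.2)) ∂μ.prod μ) / 2 := by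
  have hu := hper.aestronglyMeasurable_of_restrict_Ioo hT hL2.1
  have hG : AEStronglyMeasurable
      (fun z : ℝ × ℝ × ℝ => (u (z.1 + z.2.1) - u z.1) * (u (z.1 + z.2.2) - u z.1))
      ((volume.restrict (Ioo 0 T)).prod (μ.prod μ)) :=
    ((aestronglyMeasurable_comp_add_prod hu measurable_fst _).sub hu.restrict.comp_fst).mul
      ((aestronglyMeasurable_comp_add_prod hu measurable_snd _).sub hu.restrict.comp_fst)
  calc ∫ x in Ioo 0 T, (∫ s, k s * (u (x + s) - u x) ∂μ) ^ 2
      = ∫ x in Ioo 0 T, ∫ z, k z.1 * k z.2 * ((u (x + z.1) - u x) * (u (x + z.2) - u x))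
          ∂μ.prod μ := by
        congr 1 with x
        rw [sq, ← integral_prod_mul]
        congr 1 with z
        ring
    _ = ∫ z, k z.1 * k z.2 * (∫ x in Ioo 0 T, (u (x + z.1) - u x) * (u (x + z.2) - u x))
          ∂μ.prod μ :=
        integral_integral_swap_mul_of_bounded (hk.mul_prod hk) hG
          (fun z => integrableOn_mul_sub_comp_add hper hT hL2 z.1 z.2)
          (fun z => integral_abs_mul_sub_comp_add_le hper hT hL2 z.1 z.2)
    _ = _ := by
        simp only [integral_mul_sub_comp_add hper hT hL2, mul_div_assoc']
        exact integral_div _ _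

theorem integral_integral_mul_sq_sub_comp_add_add :
    ∫ x in Ioo 0 T, ∫ z, k z.1 * k z.2 / 2 * (u (x + z.1 + z.2) - u x) ^ 2 ∂μ.prod μ
      = (∫ z, k z.1 * k z.2 * sqDistTranslate u T (z.1 + z.2) ∂μ.prod μ) / 2 := by
  have hu := hper.aestronglyMeasurable_of_restrict_Ioo hT hL2.1
  have hG : AEStronglyMeasurable (fun z : ℝ × ℝ × ℝ => (u (z.1 + z.2.1 + z.2.2) - u z.1) ^ 2)
      ((volume.restrict (Ioo 0 T)).prod (μ.prod μ)) := by
    simp only [add_assoc]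
    exact ((aestronglyMeasurable_comp_add_prod hu (measurable_fst.add measurable_snd) _).sub
      hu.restrict.comp_fst).pow 2
  have hsq (a : ℝ) : ∫ x in Ioo 0 T, (u (x + a) - u x) ^ 2 = sqDistTranslate u T a := rfl
  rw [integral_integral_swap_mul_of_bounded ((hk.mul_prod hk).div_const 2) hG
    (fun z => by
      simpa [add_assoc, IntegrableOn] using integrableOn_sq_sub_comp_add hper hT hL2 (z.1 + z.2) 0)
    (fun z => by
      simpa [add_assoc, hsq] using (abs_le.1 (abs_sqDistTranslate_le hper hT hL2 (z.1 + z.2))).2),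
    ← integral_div]
  simp only [add_assoc, hsq]
  congr 1 with z
  ring

end KernelForms

theorem integrable_div_of_integrable_div_abs {μ : Measure ℝ} {g : ℝ → ℝ}
    (h : Integrable (fun s => g s / |s|) μ) : Integrable (fun s => g s / s) μ := by
  refine h.congr' ?_ (ae_of_all _ fun s => by simp)
  refine (h.1.mul (measurable_abs.div measurable_id).aestronglyMeasurable).congr
    (ae_of_all _ fun s => ?_)
  show g s / |s| * (|s| / s) = g s / s
  rcases eq_or_ne s 0 with rfl | hs
  · simp
  · rw [div_mul_div_comm, mul_comm |s|, mul_div_mul_right _ _ (abs_ne_zero.2 hs)]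

theorem dirichlet_double_integral_form_general (ρ u : ℝ → ℝ) (δ : ℝ)
    (hper : Function.Periodic u 1)
    (hL2 : MemLp u 2 (volume.restrict (Ioo (0 : ℝ) 1)))
    (hint : IntegrableOn (fun s => ρ |s| / |s|) (Ioo (-δ) δ)) :
    (∫ x in Ioo (0 : ℝ) 1, (Gop ρ δ u x) ^ 2)
      = ∫ x in Ioo (0 : ℝ) 1,
          ∫ p in (Ioo (-δ) δ) ×ˢ (Ioo (-δ) δ),
            ρ |p.1| * ρ |p.2| / (2 * p.1 * p.2) * (u (x + p.1 + p.2) - u x) ^ 2 := by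
  have hk := integrable_div_of_integrable_div_abs hint
  have hodd (s : ℝ) : ρ |-s| / -s = -(ρ |s| / s) := by rw [abs_neg, div_neg]
  have hGop (x : ℝ) : Gop ρ δ u x = ∫ s in Ioo (-δ) δ, ρ |s| / s * (u (x + s) - u x) := by
    simp only [Gop, mul_div_right_comm]
  have hkernel (x : ℝ) :
      ∫ p in (Ioo (-δ) δ) ×ˢ (Ioo (-δ) δ),
        ρ |p.1| * ρ |p.2| / (2 * p.1 * p.2) * (u (x + p.1 + p.2) - u x) ^ 2
      = ∫ p, ρ |p.1| / p.1 * (ρ |p.2| / p.2) / 2 * (u (x + p.1 + p.2) - u x) ^ 2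
          ∂(volume.restrict (Ioo (-δ) δ)).prod (volume.restrict (Ioo (-δ) δ)) := by
    rw [Measure.volume_eq_prod, ← Measure.prod_restrict]
    congr 1 with p
    ring
  have hLHS := integral_sq_integral_mul_sub_comp_add hper one_pos hL2 hk
  have hRHS := integral_integral_mul_sq_sub_comp_add_add hper one_pos hL2 hk
  have hu := hper.aestronglyMeasurable_of_restrict_Ioo one_pos hL2.1
  have hsymm := integral_prod_odd_mul_sub_eq_add Measure.restrict_le_self.absolutelyContinuous
    hk hodd (aestronglyMeasurable_sqDistTranslate hu) (abs_sqDistTranslate_le hper one_pos hL2)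
  simp only [hGop, hkernel, hLHS, hRHS, hsymm]

theorem dirichlet_double_integral_form (ρ u : ℝ → ℝ) (δ : ℝ) (hδ : 0 < δ)
    (hper : Function.Periodic u 1)
    (hL2 : MemLp u 2 (volume.restrict (Ioo (0 : ℝ) 1)))
    (hsupp : ∀ s, δ ≤ |s| → ρ |s| = 0)
    (hint : IntegrableOn (fun s => ρ |s| / |s|) (Ioo (-δ) δ)) :
    (∫ x in Ioo (0 : ℝ) 1, (Gop ρ δ u x) ^ 2)
      = ∫ x in Ioo (0 : ℝ) 1,
          ∫ p in (Ioo (-δ) δ) ×ˢ (Ioo (-δ) δ),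
            ρ |p.1| * ρ |p.2| / (2 * p.1 * p.2) * (u (x + p.1 + p.2) - u x) ^ 2 :=
  dirichlet_double_integral_form_general ρ u δ hper hL2 hint
end
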